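/- arXiv:1907.06898 — 3 statements merged into one kernel-verified Lean document; each statement's English description precedes it below -/
import Mathlib

section
/- In a geodesic metric space, if every geodesic triangle is δ-slim (each side lies in the δ-neighborhood of the union of the other two sides), then for any four points a,b,c,d, the Gromov product satisfies (a,c)_b ≥ min((a,d)_b, (d,c)_b) − 8δ. -/
/-!
Pick a point `m` on `[a,c]` nearly realising `(a,c)_b`: at distance `(b,c)_a` from `a`, so that the
`δ`-close point of `[b,a] ∪ [b,c]` given by slimness of the triangle `b a c` forces
`dist b m ≤ (a,c)_b + 2δ`. Slimness of the triangle `a d c` puts `m` within `δ` of a point `w`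
of `[a,d] ∪ [d,c]`, and every point of a geodesic `[x,y]` is at distance at least `(x,y)_b`
from `b`. Hence `min ((a,d)_b, (d,c)_b) ≤ dist b w ≤ (a,c)_b + 3δ`.
-/

open Set Metric

/-- `s` is (the image of) a geodesic segment from `a` to `b` in `X`. -/
def IsGeodesicSegment {X : Type*} [MetricSpace X] (a b : X) (s : Set X) : Prop :=
  ∃ f : ℝ → X, f 0 = a ∧ f (dist a b) = b ∧
    (∀ u ∈ Icc (0 : ℝ) (dist a b), ∀ v ∈ Icc (0 : ℝ) (dist a b),
      dist (f u) (f v) = |u - v|) ∧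
    s = f '' Icc (0 : ℝ) (dist a b)

section

variable {X : Type*} [MetricSpace X]

/-- The Gromov product `(x,y)_w`. -/
noncomputable def gromovProduct (w x y : X) : ℝ :=
  (dist w x + dist w y - dist x y) / 2

lemma gromovProduct_mem_Icc (w x y : X) : gromovProduct w x y ∈ Icc 0 (dist w y) := by
  unfold gromovProduct
  constructor <;> linarith [dist_triangle x w y, dist_comm x w, dist_triangle w y x, dist_comm x y]

namespace IsGeodesicSegment

variable {x y : X} {s : Set X}

lemma dist_add_dist_of_mem (hs : IsGeodesicSegment x y s) {m : X} (hm : m ∈ s) :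
    dist x m + dist m y = dist x y := by
  obtain ⟨f, hf0, hf1, hiso, rfl⟩ := hs
  obtain ⟨t, ht, rfl⟩ := hm
  have hx : dist x (f t) = t := by
    rw [← hf0, hiso 0 ⟨le_rfl, dist_nonneg⟩ t ht, zero_sub, abs_neg, abs_of_nonneg ht.1]
  have hy : dist (f t) y = dist x y - t := by
    have := hiso t ht _ ⟨dist_nonneg, le_rfl⟩
    rwa [hf1, abs_sub_comm, abs_of_nonneg (sub_nonneg.2 ht.2)] at this
  rw [hx, hy, add_sub_cancel]

lemma exists_mem_dist_eq (hs : IsGeodesicSegment x y s) {t : ℝ} (ht : t ∈ Icc 0 (dist x y)) :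
    ∃ m ∈ s, dist x m = t := by
  obtain ⟨f, hf0, -, hiso, rfl⟩ := hs
  refine ⟨f t, mem_image_of_mem f ht, ?_⟩
  rw [← hf0, hiso 0 ⟨le_rfl, dist_nonneg⟩ t ht, zero_sub, abs_neg, abs_of_nonneg ht.1]

lemma gromovProduct_le_dist_of_mem (hs : IsGeodesicSegment x y s) (b : X) {m : X}
    (hm : m ∈ s) : gromovProduct b x y ≤ dist b m := by
  unfold gromovProduct
  linarith [hs.dist_add_dist_of_mem hm, dist_triangle b m x, dist_triangle b m y, dist_comm m x]

end IsGeodesicSegment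

lemma exists_mem_dist_le_gromovProduct_add {δ : ℝ} {b x y : X} {sbx sby sxy : Set X}
    (hbx : IsGeodesicSegment b x sbx) (hby : IsGeodesicSegment b y sby)
    (hxy : IsGeodesicSegment x y sxy) (hslim : sxy ⊆ thickening δ (sbx ∪ sby)) :
    ∃ m ∈ sxy, dist b m ≤ gromovProduct b x y + 2 * δ := by
  obtain ⟨m, hm, hxm⟩ := hxy.exists_mem_dist_eq (gromovProduct_mem_Icc x b y)
  refine ⟨m, hm, ?_⟩
  obtain ⟨z, hz, hmz⟩ := mem_thickening_iff.mp (hslim hm)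
  have hmy := hxy.dist_add_dist_of_mem hm
  have hbm := dist_triangle b z m
  unfold gromovProduct at hxm ⊢
  rcases hz with hz | hz
  · linarith [hbx.dist_add_dist_of_mem hz, dist_triangle x z m, dist_comm x z, dist_comm z m,
      dist_comm x b]
  · linarith [hby.dist_add_dist_of_mem hz, dist_triangle y z m, dist_comm y z, dist_comm z m,
      dist_comm y m, dist_comm x b, dist_comm y b]

end

theorem slim_triangles_imply_gromov_hyperbolic_general {X : Type*} [MetricSpace X] (δ : ℝ)
    (hgeod : ∀ a b : X, ∃ s : Set X, IsGeodesicSegment a b s)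
    (hslim : ∀ (a b c : X) (sab sbc sac : Set X),
      IsGeodesicSegment a b sab → IsGeodesicSegment b c sbc → IsGeodesicSegment a c sac →
      sab ⊆ thickening δ (sbc ∪ sac) ∧ sbc ⊆ thickening δ (sab ∪ sac) ∧
        sac ⊆ thickening δ (sab ∪ sbc)) :
    ∀ a b c d : X,
      (dist b a + dist b c - dist a c) / 2 ≥
        min ((dist b a + dist b d - dist a d) / 2)
            ((dist b d + dist b c - dist d c) / 2) - 8 * δ := by
  intro a b c d
  obtain ⟨sba, hba⟩ := hgeod b a
  obtain ⟨sbc, hbc⟩ := hgeod b c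
  obtain ⟨sac, hac⟩ := hgeod a c
  obtain ⟨sad, had⟩ := hgeod a d
  obtain ⟨sdc, hdc⟩ := hgeod d c
  obtain ⟨m, hm, hbm⟩ := exists_mem_dist_le_gromovProduct_add hba hbc hac
    (hslim b a c sba sac sbc hba hac hbc).2.1
  obtain ⟨w, hw, hmw⟩ := mem_thickening_iff.mp ((hslim a d c sad sdc sac had hdc hac).2.2 hm)
  have hbw : min (gromovProduct b a d) (gromovProduct b d c) ≤ dist b w := by
    rcases hw with hw | hw
    · exact min_le_of_left_le (had.gromovProduct_le_dist_of_mem b hw)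
    · exact min_le_of_right_le (hdc.gromovProduct_le_dist_of_mem b hw)
  have := dist_triangle b m w
  have hδ : 0 ≤ δ := dist_nonneg.trans hmw.le
  change gromovProduct b a c ≥ min (gromovProduct b a d) (gromovProduct b d c) - 8 * δ
  linarith

/-- In a geodesic metric space in which every geodesic triangle is `δ`-slim (each side
is contained in the union of the `δ`-neighborhoods of the other two sides), the Gromov
product satisfies `(a,c)_b ≥ min ((a,d)_b, (d,c)_b) − 8δ` for any four points. -/
theorem slim_triangles_imply_gromov_hyperbolic {X : Type*} [MetricSpace X] (δ : ℝ)
    (hδ : 0 < δ)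
    (hgeod : ∀ a b : X, ∃ s : Set X, IsGeodesicSegment a b s)
    (hslim : ∀ (a b c : X) (sab sbc sac : Set X),
      IsGeodesicSegment a b sab → IsGeodesicSegment b c sbc → IsGeodesicSegment a c sac →
      sab ⊆ thickening δ (sbc ∪ sac) ∧ sbc ⊆ thickening δ (sab ∪ sac) ∧
        sac ⊆ thickening δ (sab ∪ sbc)) :
    ∀ a b c d : X,
      (dist b a + dist b c - dist a c) / 2 ≥
        min ((dist b a + dist b d - dist a d) / 2)
            ((dist b d + dist b c - dist d c) / 2) - 8 * δ :=
  slim_triangles_imply_gromov_hyperbolic_general δ hgeod hslim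
end

section
/- Let Γ be a group acting on a bipartite tree Σ = (V_e ⊔ V_ne, E) such that every vertex in V_e has elementary (virtually cyclic) stabilizer, every vertex in V_ne has non-elementary stabilizer, and every vertex stabilizer H satisfies Comm_Γ(H) = H (fullness). If two distinct vertices u, v have equal stabilizers, then both u and v lie in V_e, and moreover the stabilizer of every V_e-vertex on the geodesic [u,v] equals Γ(u). -/
/-!
An element fixing both ends of a path in a tree fixes the whole path, by uniqueness of paths;
so `Γ(u) = Γ(v)` fixes every vertex `w` of `[u,v]`. A `Ve`-vertex `w` on `[u,v]` then has
`Γ(u) ≤ Γ(w)` with `Γ(w)` elementary, so `Γ(u)` is elementary and maximality gives equality.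
For the endpoints, `Γ(u)` fixes the neighbour of `u` on `[u,v]`: if that neighbour is in `Ve`,
`Γ(u)` is elementary as a subgroup of its stabilizer, and otherwise `u ∈ Ve` by bipartiteness.
-/

open MulAction

theorem SimpleGraph.IsAcyclic.apply_eq_self_of_mem_support {V : Type*} {G : SimpleGraph V}
    (hG : G.IsAcyclic) {f : G →g G} (hf : Function.Injective f) {u v w : V} {p : G.Walk u v}
    (hp : p.IsPath) (hu : f u = u) (hv : f v = v) (hw : w ∈ p.support) : f w = w := by
  have himage : (p.map f).copy hu hv = p :=
    congrArg Subtype.val <| (hG.subsingleton_path u v).elim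
      ⟨_, (Walk.isPath_copy _ hu hv).2 (hp.map hf)⟩ ⟨p, hp⟩
  have hsupport : p.support.map f = p.support.map id := by
    simpa only [Walk.support_copy, Walk.support_map, List.map_id] using
      congrArg Walk.support himage
  exact List.map_eq_map_iff.1 hsupport w hw

theorem inf_le_stabilizer_of_mem_support {V Γ : Type*} [Group Γ] {G : SimpleGraph V}
    {φ : Γ →* Equiv.Perm V} (hG : G.IsAcyclic)
    (hAut : ∀ (g : Γ) (a b : V), G.Adj a b → G.Adj (φ g a) (φ g b))
    {u v w : V} {p : G.Walk u v} (hp : p.IsPath) (hw : w ∈ p.support) :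
    (stabilizer (Equiv.Perm V) u).comap φ ⊓ (stabilizer (Equiv.Perm V) v).comap φ ≤
      (stabilizer (Equiv.Perm V) w).comap φ := by
  rintro g ⟨hu, hv⟩
  simp only [SetLike.mem_coe, Subgroup.mem_comap, mem_stabilizer_iff,
    Equiv.Perm.smul_def] at hu hv ⊢
  exact hG.apply_eq_self_of_mem_support (f := ⟨φ g, hAut g _ _⟩) (φ g).injective hp hu hv hw

theorem mem_of_adj_of_stabilizer_le {V Γ : Type*} [Group Γ] {G : SimpleGraph V}
    {stab : V → Subgroup Γ} {Ve : Set V} {Elementary : Subgroup Γ → Prop}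
    (hVe : ∀ x : V, x ∈ Ve ↔ Elementary (stab x))
    (hbip : ∀ a b : V, G.Adj a b → (a ∈ Ve ↔ b ∉ Ve))
    (hSub : ∀ H K : Subgroup Γ, Elementary K → H ≤ K → Elementary H)
    {u b : V} (hadj : G.Adj u b) (hle : stab u ≤ stab b) : u ∈ Ve := by
  by_cases hb : b ∈ Ve
  · exact (hVe u).2 (hSub _ _ ((hVe b).1 hb) hle)
  · exact (hbip u b hadj).2 hb

theorem equal_stabilizers_implies_elementary_general
    {V : Type*} (G : SimpleGraph V) (hT : G.IsTree)
    {Γ : Type*} [Group Γ] (φ : Γ →* Equiv.Perm V)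
    (hAut : ∀ (g : Γ) (a b : V), G.Adj a b → G.Adj (φ g a) (φ g b))
    (stab : V → Subgroup Γ)
    (hstab : ∀ x : V, stab x = (MulAction.stabilizer (Equiv.Perm V) x).comap φ)
    (Ve : Set V)
    (Elementary : Subgroup Γ → Prop)
    -- the partition: `Ve` consists exactly of the vertices with elementary stabilizer
    (hVe : ∀ x : V, x ∈ Ve ↔ Elementary (stab x))
    -- bipartite: edges join `Ve` to its complement
    (hbip : ∀ a b : V, G.Adj a b → (a ∈ Ve ↔ b ∉ Ve))
    -- subgroups of elementary groups are elementary
    (hSub : ∀ H K : Subgroup Γ, Elementary K → H ≤ K → Elementary H)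
    -- fullness of vertex stabilizers: every elementary vertex stabilizer is maximal
    (hFull : ∀ x ∈ Ve, ∀ K : Subgroup Γ, Elementary K → stab x ≤ K → stab x = K) :
    ∀ u v : V, u ≠ v → stab u = stab v →
      u ∈ Ve ∧ v ∈ Ve ∧
      ∀ (p : G.Walk u v), p.IsPath →
        ∀ w ∈ p.support, w ∈ Ve → stab w = stab u := by
  have fixes_path : ∀ {a b : V} (p : G.Walk a b), p.IsPath → stab a = stab b →
      ∀ w ∈ p.support, stab a ≤ stab w := by
    intro a b p hp hab w hw
    simp only [hstab] at hab ⊢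
    exact (le_inf le_rfl hab.le).trans (inf_le_stabilizer_of_mem_support hT.isAcyclic hAut hp hw)
  have endpoint_mem : ∀ {a b : V}, a ≠ b → stab a = stab b → a ∈ Ve := by
    intro a b hab h
    obtain ⟨p, hp, -⟩ := hT.existsUnique_path a b
    exact mem_of_adj_of_stabilizer_le hVe hbip hSub (p.adj_snd (p.not_nil_of_ne hab))
      (fixes_path p hp h _ (p.getVert_mem_support 1))
  intro u v huv hst
  refine ⟨endpoint_mem huv hst, endpoint_mem huv.symm hst.symm, fun p hp w hw hwVe => ?_⟩
  exact (hFull u (endpoint_mem huv hst) _ ((hVe w).1 hwVe) (fixes_path p hp hst w hw)).symm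

/-- Bowditch-style bipartite splitting tree: suppose a one-ended hyperbolic group `Γ`
acts on a bipartite tree whose vertex set is partitioned into `Ve` (vertices with
elementary, i.e. virtually cyclic, stabilizer) and its complement (vertices with
non-elementary stabilizer), each vertex stabilizer being full (equal to its
commensurator, abstracted here via the listed standard facts).  If two distinct
vertices `u, v` have equal stabilizers, then both lie in `Ve`, and the stabilizer of
every `Ve`-vertex on the geodesic `[u,v]` equals `Γ(u)`. -/
theorem equal_stabilizers_implies_elementary
    {V : Type*} (G : SimpleGraph V) (hT : G.IsTree)
    {Γ : Type*} [Group Γ] (φ : Γ →* Equiv.Perm V)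
    (hAut : ∀ (g : Γ) (a b : V), G.Adj a b → G.Adj (φ g a) (φ g b))
    (stab : V → Subgroup Γ)
    (hstab : ∀ x : V, stab x = (MulAction.stabilizer (Equiv.Perm V) x).comap φ)
    (Ve : Set V)
    (Elementary : Subgroup Γ → Prop)
    -- the partition: `Ve` consists exactly of the vertices with elementary stabilizer
    (hVe : ∀ x : V, x ∈ Ve ↔ Elementary (stab x))
    -- bipartite: edges join `Ve` to its complement
    (hbip : ∀ a b : V, G.Adj a b → (a ∈ Ve ↔ b ∉ Ve))
    -- fullness: each vertex stabilizer is its own commensurator, expressed via: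
    -- a non-elementary subgroup is not contained in an elementary subgroup
    (hNE : ∀ H K : Subgroup Γ, ¬ Elementary H → Elementary K → ¬ H ≤ K)
    -- subgroups of elementary groups are elementary
    (hSub : ∀ H K : Subgroup Γ, Elementary K → H ≤ K → Elementary H)
    -- any infinite elementary subgroup lies in a unique maximal elementary subgroup
    (hMax : ∀ H : Subgroup Γ, (H : Set Γ).Infinite → Elementary H →
      ∃! M : Subgroup Γ, Elementary M ∧ H ≤ M ∧
        ∀ K : Subgroup Γ, Elementary K → M ≤ K → M = K)
    -- fullness of vertex stabilizers: every elementary vertex stabilizer is maximal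
    (hFull : ∀ x ∈ Ve, ∀ K : Subgroup Γ, Elementary K → stab x ≤ K → stab x = K) :
    ∀ u v : V, u ≠ v → stab u = stab v →
      u ∈ Ve ∧ v ∈ Ve ∧
      ∀ (p : G.Walk u v), p.IsPath →
        ∀ w ∈ p.support, w ∈ Ve → stab w = stab u :=
  equal_stabilizers_implies_elementary_general G hT φ hAut stab hstab Ve Elementary hVe hbip hSub
    hFull
end

section
/- Let Γ be a group acting on a tree Σ, and suppose u ∈ V_e and v ∈ V_ne are vertices with H := Γ(u) ∩ Γ(v) infinite, where Γ(u) is contained in a unique maximal elementary subgroup and every V_e vertex stabilizer is maximal elementary. If w is the neighbor of v on the geodesic [u,v] and w ∈ V_e, then Γ(u) = Γ(w). -/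
private lemma list_map_fix {V : Type*} (f : V → V) :
    ∀ l : List V, l.map f = l → ∀ x ∈ l, f x = x := by
  intro l
  induction l with
  | nil => intro _ x hx; simp at hx
  | cons a l ih =>
      intro h x hx
      simp only [List.map_cons, List.cons.injEq] at h
      rw [List.mem_cons] at hx
      rcases hx with hx | hx
      · exact hx ▸ h.1
      · exact ih h.2 x hx



/-- Suppose a (hyperbolic) group `Γ` acts on a bipartite tree with parts `Ve` and
`Vne`, where stabilizers of `Ve`-vertices are maximal elementary subgroups and every
infinite elementary subgroup lies in a unique maximal elementary subgroup.  If
`u ∈ Ve`, `v ∈ Vne`, the intersection `H = Γ(u) ∩ Γ(v)` is infinite, and `w ∈ Ve` is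
the neighbor of `v` on the geodesic `[u,v]`, then `Γ(u) = Γ(w)`. -/
theorem stabilizer_eq_of_infinite_intersection
    {V : Type*} (G : SimpleGraph V) (hT : G.IsTree)
    {Γ : Type*} [Group Γ] (φ : Γ →* Equiv.Perm V)
    (hAut : ∀ (g : Γ) (a b : V), G.Adj a b → G.Adj (φ g a) (φ g b))
    (stab : V → Subgroup Γ)
    (hstab : ∀ x : V, stab x = (MulAction.stabilizer (Equiv.Perm V) x).comap φ)
    (Ve Vne : Set V) (hpart : ∀ x : V, x ∈ Ve ↔ x ∉ Vne)
    (Elementary : Subgroup Γ → Prop)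
    -- subgroups of elementary groups are elementary
    (hSub : ∀ H K : Subgroup Γ, Elementary K → H ≤ K → Elementary H)
    -- stabilizers of `Ve`-vertices are maximal elementary subgroups
    (hMaxEl : ∀ x ∈ Ve, Elementary (stab x) ∧
      ∀ K : Subgroup Γ, Elementary K → stab x ≤ K → stab x = K)
    -- any infinite elementary subgroup lies in a unique maximal elementary subgroup
    (hMax : ∀ H : Subgroup Γ, (H : Set Γ).Infinite → Elementary H →
      ∃! M : Subgroup Γ, Elementary M ∧ H ≤ M ∧
        ∀ K : Subgroup Γ, Elementary K → M ≤ K → M = K)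
    (u v w : V) (hu : u ∈ Ve) (hv : v ∈ Vne)
    (hH : ((stab u ⊓ stab v : Subgroup Γ) : Set Γ).Infinite)
    (p : G.Walk u v) (hp : p.IsPath)
    (hwmem : w ∈ p.support) (hwadj : G.Adj w v) (hw : w ∈ Ve) :
    stab u = stab w := by
  -- each element of H fixes every vertex on the path, in particular w
  have hmem : ∀ {x : V} (g : Γ), g ∈ stab x ↔ φ g x = x := by
    intro x g
    rw [hstab x]
    simp [MulAction.mem_stabilizer_iff, Equiv.Perm.smul_def]
  have hle : stab u ⊓ stab v ≤ stab w := by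
    intro g hg
    have hgu : φ g u = u := (hmem g).1 hg.1
    have hgv : φ g v = v := (hmem g).1 hg.2
    let f : G →g G := ⟨φ g, fun {a b} h => hAut g a b h⟩
    have hinj : Function.Injective f := (φ g).injective
    let q : G.Walk u v := (p.map f).copy hgu hgv
    have hq : q.IsPath := by
      simpa [q] using p.map_isPath_of_injective hinj hp
    have hpq : (⟨p, hp⟩ : G.Path u v) = ⟨q, hq⟩ :=
      hT.IsAcyclic.path_unique _ _
    have hsupp : p.support.map (φ g) = p.support := by
      have : q.support = p.support := by
        simpa using congrArg (fun r : G.Path u v => (r : G.Walk u v).support) hpq.symm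
      simp [q, SimpleGraph.Walk.support_copy, SimpleGraph.Walk.support_map] at this
      exact this
    exact (hmem g).2 (list_map_fix (φ g) p.support hsupp w hwmem)
  have hElH : Elementary (stab u ⊓ stab v) :=
    hSub _ _ (hMaxEl u hu).1 inf_le_left
  obtain ⟨M, _, hMuniq⟩ := hMax _ hH hElH
  have h1 : stab u = M :=
    hMuniq (stab u) ⟨(hMaxEl u hu).1, inf_le_left, (hMaxEl u hu).2⟩
  have h2 : stab w = M :=
    hMuniq (stab w) ⟨(hMaxEl w hw).1, hle, (hMaxEl w hw).2⟩
  rw [h1, h2]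
end
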